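/- arXiv:2201.12479 — 3 statements merged into one kernel-verified Lean document; each statement's English description precedes it below -/
import Mathlib

section
/- Let $g$ be a $3\times 3$ real matrix with $g_{ij}=0$ for $i<j$, $g_{ij}>0$ for $i\geq j$, and with the $2\times 2$ minor $g_{21}g_{32}-g_{31}g_{22}>0$. Then every eigenspace of $g$ acting on $\mathbb{R}^3$ is one-dimensional. -/
/-!
The coordinate `v ↦ v 2` is injective on every eigenspace, which therefore has dimension
at most one. Indeed, let `v` be an eigenvector with `v 2 = 0`. If `v 0 ≠ 0`, the first row
forces `μ = g 0 0`, and the last two rows give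
`(g 1 0 * g 2 1 - g 2 0 * (g 1 1 - g 0 0)) * v 0 = 0`; but this coefficient is the
positive minor plus `g 2 0 * g 0 0 > 0`. Hence `v 0 = 0`, and then `g 2 1 * v 1 = 0`.
-/

open Matrix

theorem Submodule.finrank_le_one_of_linearMap_eq_zero {K V : Type*} [DivisionRing K]
    [AddCommGroup V] [Module K V] (p : Submodule K V) (f : V →ₗ[K] K)
    (hf : ∀ v ∈ p, f v = 0 → v = 0) : Module.finrank K p ≤ 1 := by
  have hinj : Function.Injective (f.domRestrict p) := by
    rw [← LinearMap.ker_eq_bot, Submodule.eq_bot_iff]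
    intro v hv
    exact Subtype.ext (hf v v.2 hv)
  simpa using LinearMap.finrank_le_finrank_of_injective hinj

theorem Matrix.eq_zero_of_mulVec_eq_smul_of_apply_two_eq_zero {K : Type*} [Field K]
    [LinearOrder K] [IsStrictOrderedRing K] {g : Matrix (Fin 3) (Fin 3) K} {μ : K}
    {v : Fin 3 → K} (h01 : g 0 1 = 0) (h00 : 0 < g 0 0) (h20 : 0 < g 2 0) (h21 : 0 < g 2 1)
    (hminor : 0 < g 1 0 * g 2 1 - g 2 0 * g 1 1) (hv : g *ᵥ v = μ • v) (hv2 : v 2 = 0) :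
    v = 0 := by
  have row (i : Fin 3) : g i 0 * v 0 + g i 1 * v 1 = μ * v i := by
    simpa [mulVec, dotProduct, Fin.sum_univ_three, hv2] using congrFun hv i
  have row0 : g 0 0 * v 0 = μ * v 0 := by simpa [h01] using row 0
  have row1 := row 1
  have row2 : g 2 0 * v 0 + g 2 1 * v 1 = 0 := by simpa [hv2] using row 2
  have hv0 : v 0 = 0 := by
    by_contra h0
    obtain rfl : μ = g 0 0 := (mul_right_cancel₀ h0 row0).symm
    have hcoef : 0 < g 1 0 * g 2 1 - g 2 0 * (g 1 1 - g 0 0) := by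
      nlinarith [mul_pos h20 h00]
    have : (g 1 0 * g 2 1 - g 2 0 * (g 1 1 - g 0 0)) * v 0 = 0 := by
      linear_combination g 2 1 * row1 - (g 1 1 - g 0 0) * row2
    exact h0 ((mul_eq_zero.mp this).resolve_left hcoef.ne')
  have hv1 : v 1 = 0 := by
    have : g 2 1 * v 1 = 0 := by linear_combination row2 - g 2 0 * hv0
    exact (mul_eq_zero.mp this).resolve_left h21.ne'
  ext i
  fin_cases i <;> assumption

/-- A 3×3 totally positive lower triangular real matrix has all eigenspaces
one-dimensional. -/
theorem stmt1 (g : Matrix (Fin 3) (Fin 3) ℝ)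
    (hzero : ∀ i j : Fin 3, i < j → g i j = 0)
    (hpos : ∀ i j : Fin 3, j ≤ i → 0 < g i j)
    (hminor : 0 < g 1 0 * g 2 1 - g 2 0 * g 1 1) :
    ∀ μ : ℝ, Module.End.eigenspace (Matrix.mulVecLin g) μ ≠ ⊥ →
      Module.finrank ℝ (Module.End.eigenspace (Matrix.mulVecLin g) μ) = 1 := by
  intro μ hne
  set E := Module.End.eigenspace (mulVecLin g) μ
  have hle := E.finrank_le_one_of_linearMap_eq_zero
    (LinearMap.proj (R := ℝ) (φ := fun _ : Fin 3 ↦ ℝ) 2) fun v hv hv2 ↦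
      eq_zero_of_mulVec_eq_smul_of_apply_two_eq_zero (hzero 0 1 (by decide))
        (hpos 0 0 le_rfl) (hpos 2 0 (by decide)) (hpos 2 1 (by decide)) hminor
        (Module.End.mem_eigenspace_iff.mp hv) hv2
  have hE : Module.finrank ℝ E ≠ 0 := fun h ↦ hne (Submodule.finrank_eq_zero.mp h)
  omega
end

section
/- Let $\Phi$ be an irreducible root system with set of simple roots indexed by $I$, and let $J, J'$ be proper subsets of $I$. Let $w_{J'}$ denote the longest element of the parabolic subgroup $W_{J'}$ of the Weyl group. Then there exists $j \in I \setminus J'$ such that $w_{J'}(\alpha_j) \notin \Phi_J$, where $\Phi_J$ is the sub-root system generated by the simple roots $\{\alpha_i : i \in J\}$. -/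
/-!
Sign coherence of `s_i α_j` forces distinct simple roots to be obtuse. The element `w` preserves
inner products, acts trivially modulo `span α(J')` and hence permutes the finite set
`Φ ∩ span α(J')`; as it sends the positive roots there to negative ones, every `α_m` with
`m ∈ J'` is `w u` for a negative root `u` of `Φ_{J'}`, so `⟪w α_j, α_m⟫ = ⟪α_j, u⟫ ≥ 0` for
`j ∉ J'`. If all `w α_j` (`j ∉ J'`) lay in `Φ_J`, the union `S` of their supports would contain
`I \ J'` and lie in `J`; connectedness of the Dynkin diagram gives `i ∈ S`, `m ∉ S` with
`⟪α_i, α_m⟫ < 0`, whence `m ∈ J'` and `⟪w α_j, α_m⟫ < 0` for some `j ∉ J'`.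
-/
open scoped RealInnerProductSpace Pointwise
open Submodule Set

section Reflection

variable {V : Type*} [NormedAddCommGroup V] [InnerProductSpace ℝ V]

noncomputable def hyperplaneReflection (a x : V) : V := x - (2 * ⟪a, x⟫ / ⟪a, a⟫) • a

theorem inner_hyperplaneReflection (a x y : V) :
    ⟪hyperplaneReflection a x, hyperplaneReflection a y⟫ = ⟪x, y⟫ := by
  by_cases ha : a = 0
  · simp [hyperplaneReflection, ha]
  have : ⟪a, a⟫ ≠ 0 := inner_self_ne_zero.2 ha
  simp only [hyperplaneReflection, inner_sub_left, inner_sub_right, real_inner_smul_left,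
    real_inner_smul_right, real_inner_comm a x]
  field_simp
  ring

theorem hyperplaneReflection_involutive (a : V) :
    Function.Involutive (hyperplaneReflection a) := by
  intro x
  by_cases ha : a = 0
  · simp [hyperplaneReflection, ha]
  have : ⟪a, a⟫ ≠ 0 := inner_self_ne_zero.2 ha
  simp only [hyperplaneReflection, inner_sub_right, real_inner_smul_right]
  rw [sub_sub, ← add_smul]
  field_simp
  norm_num

theorem hyperplaneReflection_sub_self_mem (a x : V) :
    hyperplaneReflection a x - x ∈ ℝ ∙ a := by
  simpa [hyperplaneReflection] using
    smul_mem _ (-(2 * ⟪a, x⟫ / ⟪a, a⟫)) (mem_span_singleton_self a)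

end Reflection

def Submodule.fixingQuotientSubgroup {R M : Type*} [Ring R] [AddCommGroup M] [Module R M]
    (K : Submodule R M) : Subgroup (M ≃ₗ[R] M) where
  carrier := {g | ∀ v, g v - v ∈ K}
  one_mem' v := by simp
  mul_mem' {g h} hg hh v := by
    simpa [sub_add_sub_cancel] using K.add_mem (hg (h v)) (hh v)
  inv_mem' {g} hg v := by
    simpa using K.neg_mem (hg (g.symm v))

theorem Submodule.mem_fixingQuotientSubgroup {R M : Type*} [Ring R] [AddCommGroup M]
    [Module R M] {K : Submodule R M} {g : M ≃ₗ[R] M} :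
    g ∈ K.fixingQuotientSubgroup ↔ ∀ v, g v - v ∈ K :=
  Iff.rfl

theorem Submodule.apply_mem_of_mem_fixingQuotientSubgroup {R M : Type*} [Ring R] [AddCommGroup M]
    [Module R M] {K : Submodule R M} {g : M ≃ₗ[R] M} (hg : g ∈ K.fixingQuotientSubgroup) {v : M}
    (hv : v ∈ K) : g v ∈ K := by
  simpa using K.add_mem (mem_fixingQuotientSubgroup.1 hg v) hv

def innerPreservingSubgroup (V : Type*) [NormedAddCommGroup V] [InnerProductSpace ℝ V] :
    Subgroup (V ≃ₗ[ℝ] V) where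
  carrier := {g | ∀ x y, ⟪g x, g y⟫ = ⟪x, y⟫}
  one_mem' x y := rfl
  mul_mem' {g h} hg hh x y := (hg (h x) (h y)).trans (hh x y)
  inv_mem' {g} hg x y := by
    simpa using (hg (g.symm x) (g.symm y)).symm

theorem mem_inf_of_coe_eq_hyperplaneReflection {V : Type*} [NormedAddCommGroup V]
    [InnerProductSpace ℝ V] {Φ : Set V} {K : Submodule ℝ V} {g : V ≃ₗ[ℝ] V} {a : V}
    (hg : ⇑g = hyperplaneReflection a) (hΦ : MapsTo g Φ Φ) (ha : a ∈ K) :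
    g ∈ MulAction.stabilizer (V ≃ₗ[ℝ] V) Φ ⊓ innerPreservingSubgroup V ⊓
      K.fixingQuotientSubgroup := by
  refine ⟨⟨?_, fun x y => by simp only [hg, inner_hyperplaneReflection]⟩,
    mem_fixingQuotientSubgroup.2 fun v => ?_⟩
  · refine MulAction.mem_stabilizer_iff.2
      (Subset.antisymm (smul_set_subset_iff.2 hΦ) fun x hx => ?_)
    have hgg : g (g x) = x := by rw [hg]; exact hyperplaneReflection_involutive a x
    exact hgg ▸ smul_mem_smul_set (hΦ hx)
  · rw [hg]
    exact span_le.2 (singleton_subset_iff.2 ha) (hyperplaneReflection_sub_self_mem a v)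

section Basis

variable {V : Type*} [NormedAddCommGroup V] [InnerProductSpace ℝ V] {I : Type*}
  {b : Module.Basis I ℝ V}

variable (b) in
def Module.Basis.IsSignCoherent (x : V) : Prop :=
  (∀ i, 0 ≤ b.repr x i) ∨ ∀ i, b.repr x i ≤ 0

theorem Module.Basis.inner_nonpos_of_isSignCoherent_reflection {i j : I} (hij : i ≠ j)
    (h : b.IsSignCoherent (hyperplaneReflection (b i) (b j))) : ⟪b i, b j⟫ ≤ 0 := by
  by_contra! hpos
  have hcoeff : 0 < 2 * ⟪b i, b j⟫ / ⟪b i, b i⟫ :=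
    div_pos (by linarith) (real_inner_self_pos.2 (b.ne_zero i))
  have hi : b.repr (hyperplaneReflection (b i) (b j)) i = -(2 * ⟪b i, b j⟫ / ⟪b i, b i⟫) := by
    simp [hyperplaneReflection, hij.symm]
  have hj : b.repr (hyperplaneReflection (b i) (b j)) j = 1 := by
    simp [hyperplaneReflection, hij]
  rcases h with h | h
  · linarith [h i]
  · linarith [h j]

theorem Module.Basis.repr_mul_inner_nonpos (hobtuse : ∀ i j, i ≠ j → ⟪b i, b j⟫ ≤ 0) {x : V}
    (hx : ∀ k, 0 ≤ b.repr x k) {m : I} (hm : b.repr x m = 0) (k : I) :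
    b.repr x k * ⟪b k, b m⟫ ≤ 0 := by
  rcases eq_or_ne k m with rfl | hkm
  · simp [hm]
  · exact mul_nonpos_of_nonneg_of_nonpos (hx k) (hobtuse k m hkm)

variable [Fintype I]

theorem Module.Basis.repr_nonneg_of_eq_sum_intCast {x : V} {c : I → ℤ} (hc : ∀ i, 0 ≤ c i)
    (hx : x = ∑ i, (c i : ℝ) • b i) (i : I) : 0 ≤ b.repr x i := by
  rw [hx, b.repr_sum_self]
  exact_mod_cast hc i

theorem Module.Basis.repr_nonpos_of_eq_sum_intCast {x : V} {c : I → ℤ} (hc : ∀ i, c i ≤ 0)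
    (hx : x = ∑ i, (c i : ℝ) • b i) (i : I) : b.repr x i ≤ 0 := by
  rw [hx, b.repr_sum_self]
  exact_mod_cast hc i

theorem Module.Basis.isSignCoherent_of_intCoeffs {x : V}
    (h : (∃ c : I → ℤ, (∀ i, 0 ≤ c i) ∧ x = ∑ i, (c i : ℝ) • b i) ∨
      (∃ c : I → ℤ, (∀ i, c i ≤ 0) ∧ x = ∑ i, (c i : ℝ) • b i)) :
    b.IsSignCoherent x :=
  h.imp (fun ⟨_, hc, hx⟩ => repr_nonneg_of_eq_sum_intCast hc hx)
    (fun ⟨_, hc, hx⟩ => repr_nonpos_of_eq_sum_intCast hc hx)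

theorem Module.Basis.repr_nonpos_or_repr_apply_nonpos {x y : V}
    (hx : (∃ c : I → ℤ, (∀ i, 0 ≤ c i) ∧ x = ∑ i, (c i : ℝ) • b i) ∨
      (∃ c : I → ℤ, (∀ i, c i ≤ 0) ∧ x = ∑ i, (c i : ℝ) • b i))
    (hy : (∃ c : I → ℤ, (∀ i, 0 ≤ c i) ∧ x = ∑ i, (c i : ℝ) • b i) →
      ∃ c : I → ℤ, (∀ i, c i ≤ 0) ∧ y = ∑ i, (c i : ℝ) • b i) :
    (∀ i, b.repr x i ≤ 0) ∨ ∀ i, b.repr y i ≤ 0 := by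
  rcases hx with hpos | ⟨c, hc, hxc⟩
  · obtain ⟨d, hd, hyd⟩ := hy hpos
    exact .inr (repr_nonpos_of_eq_sum_intCast hd hyd)
  · exact .inl (repr_nonpos_of_eq_sum_intCast hc hxc)

theorem Module.Basis.inner_eq_sum_repr_mul_inner (x y : V) :
    ⟪x, y⟫ = ∑ k, b.repr x k * ⟪b k, y⟫ := by
  conv_lhs => rw [← b.sum_repr x]
  simp only [sum_inner, real_inner_smul_left]

theorem Module.Basis.inner_nonpos_of_repr_nonneg (hobtuse : ∀ i j, i ≠ j → ⟪b i, b j⟫ ≤ 0)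
    {x : V} (hx : ∀ k, 0 ≤ b.repr x k) {m : I} (hm : b.repr x m = 0) : ⟪x, b m⟫ ≤ 0 := by
  rw [b.inner_eq_sum_repr_mul_inner]
  exact Finset.sum_nonpos fun k _ => b.repr_mul_inner_nonpos hobtuse hx hm k

theorem Module.Basis.inner_neg_of_repr_pos (hobtuse : ∀ i j, i ≠ j → ⟪b i, b j⟫ ≤ 0)
    {x : V} (hx : ∀ k, 0 ≤ b.repr x k) {i m : I} (hm : b.repr x m = 0)
    (hi : 0 < b.repr x i) (him : ⟪b i, b m⟫ < 0) : ⟪x, b m⟫ < 0 := by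
  classical
  rw [b.inner_eq_sum_repr_mul_inner, ← Finset.add_sum_erase _ _ (Finset.mem_univ i)]
  exact add_neg_of_neg_of_nonpos (mul_neg_of_pos_of_neg hi him)
    (Finset.sum_nonpos fun k _ => b.repr_mul_inner_nonpos hobtuse hx hm k)

theorem Module.Basis.exists_inner_neg_of_connected (hobtuse : ∀ i j, i ≠ j → ⟪b i, b j⟫ ≤ 0)
    (hirr : ∀ A : Set I, A.Nonempty → A ≠ univ → ∃ i ∈ A, ∃ j, j ∉ A ∧ ⟪b i, b j⟫ ≠ 0)
    {J J' : Set I} (hJ : J ≠ univ) (hJ' : J' ≠ univ) (x : I → V)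
    (hx : ∀ j ∉ J', ∀ k, 0 ≤ b.repr (x j) k) (hxj : ∀ j ∉ J', b.repr (x j) j ≠ 0)
    (hxJ : ∀ j ∉ J', x j ∈ span ℝ (b '' J)) : ∃ j ∉ J', ∃ m ∈ J', ⟪x j, b m⟫ < 0 := by
  set S := {i | ∃ j ∉ J', b.repr (x j) i ≠ 0}
  have hSJ : S ⊆ J := fun i ⟨j, hj, hi⟩ =>
    b.mem_span_image.1 (hxJ j hj) (Finsupp.mem_support_iff.2 hi)
  obtain ⟨j₀, hj₀⟩ := (ne_univ_iff_exists_notMem J').1 hJ'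
  obtain ⟨i, ⟨j, hj, hji⟩, m, hmS, him⟩ :=
    hirr S ⟨j₀, j₀, hj₀, hxj j₀ hj₀⟩ fun h => hJ (univ_subset_iff.1 (h ▸ hSJ))
  have hmJ' : m ∈ J' := of_not_not fun h => hmS ⟨m, h, hxj m h⟩
  have hjm : b.repr (x j) m = 0 := of_not_not fun h => hmS ⟨j, hj, h⟩
  have hineq : i ≠ m := by rintro rfl; exact hmS ⟨j, hj, hji⟩
  exact ⟨j, hj, m, hmJ', b.inner_neg_of_repr_pos hobtuse (hx j hj) hjm
    ((hx j hj i).lt_of_ne' hji) ((hobtuse i m hineq).lt_of_ne him)⟩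

end Basis

section LongestElement

variable {V : Type*} [NormedAddCommGroup V] [InnerProductSpace ℝ V] {I : Type*}
  {b : Module.Basis I ℝ V} {J' : Set I} {w : V ≃ₗ[ℝ] V}

theorem Module.Basis.repr_apply_self_of_mem_fixingQuotientSubgroup
    (hw : w ∈ (span ℝ (b '' J')).fixingQuotientSubgroup) {j : I} (hj : j ∉ J') :
    b.repr (w (b j)) j = 1 := by
  have h := b.mem_span_image.1 (mem_fixingQuotientSubgroup.1 hw (b j))
  have : b.repr (w (b j) - b j) j = 0 := Finsupp.notMem_support_iff.1 fun hmem => hj (h hmem)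
  simpa [sub_eq_zero] using this

theorem Module.Basis.exists_repr_nonpos_apply_eq {Φ : Set V} (hΦ : Φ.Finite)
    (hwΦ : MapsTo w Φ Φ) (hw : w ∈ (span ℝ (b '' J')).fixingQuotientSubgroup)
    (hneg : ∀ x ∈ Φ, x ∈ span ℝ (b '' J') → (∀ i, b.repr x i ≤ 0) ∨ ∀ i, b.repr (w x) i ≤ 0)
    {m : I} (hm : m ∈ J') (hbm : b m ∈ Φ) :
    ∃ u ∈ span ℝ (b '' J'), (∀ i, b.repr u i ≤ 0) ∧ w u = b m := by
  set T := Φ ∩ span ℝ (b '' J')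
  have hmaps : MapsTo w T T := fun x hx =>
    ⟨hwΦ hx.1, apply_mem_of_mem_fixingQuotientSubgroup hw hx.2⟩
  have hbij := ((hΦ.subset inter_subset_left).injOn_iff_bijOn_of_mapsTo hmaps).1
    w.injective.injOn
  obtain ⟨u, ⟨huΦ, huK⟩, hwu⟩ := hbij.surjOn ⟨hbm, subset_span ⟨m, hm, rfl⟩⟩
  refine ⟨u, huK, (hneg u huΦ huK).resolve_right fun h => (h m).not_gt ?_, hwu⟩
  simp [hwu]

theorem Module.Basis.inner_apply_nonneg_of_repr_nonpos [Fintype I]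
    (hobtuse : ∀ i j, i ≠ j → ⟪b i, b j⟫ ≤ 0) (hinner : ∀ x y, ⟪w x, w y⟫ = ⟪x, y⟫)
    {u : V} (huK : u ∈ span ℝ (b '' J')) (hu : ∀ i, b.repr u i ≤ 0)
    {j : I} (hj : j ∉ J') : 0 ≤ ⟪w (b j), w u⟫ := by
  have hj0 : b.repr (-u) j = 0 := by
    simpa using Finsupp.notMem_support_iff.1 fun hmem => hj (b.mem_span_image.1 huK hmem)
  have := b.inner_nonpos_of_repr_nonneg hobtuse (fun k => by simpa using hu k) hj0
  rw [hinner, real_inner_comm]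
  simpa [inner_neg_left] using this

end LongestElement

/-- `w` plays the role of `w_{J'}`: it is only assumed to lie in `W_{J'}` and to send the positive
roots of `Φ_{J'}` to negative roots. -/
theorem stmt2_general {V : Type*} [NormedAddCommGroup V] [InnerProductSpace ℝ V]
    {I : Type*} [Fintype I]
    (Φ : Finset V) (α : I → V)
    (hα : ∀ i, α i ∈ Φ)
    (hindep : LinearIndependent ℝ α)
    (hspan : Submodule.span ℝ (Set.range α) = ⊤)
    (s : I → (V ≃ₗ[ℝ] V))
    (hs : ∀ i x, s i x =
      x - ((2 * (inner ℝ (α i) x : ℝ) / (inner ℝ (α i) (α i) : ℝ)) • α i))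
    (hstab : ∀ i, ∀ b ∈ Φ, s i b ∈ Φ)
    (hbase : ∀ b ∈ Φ,
      (∃ c : I → ℤ, (∀ i, 0 ≤ c i) ∧ b = ∑ i, (c i : ℝ) • α i) ∨
      (∃ c : I → ℤ, (∀ i, c i ≤ 0) ∧ b = ∑ i, (c i : ℝ) • α i))
    (hirr : ∀ A : Set I, A.Nonempty → A ≠ Set.univ →
      ∃ i ∈ A, ∃ j, j ∉ A ∧ (inner ℝ (α i) (α j) : ℝ) ≠ 0)
    (J J' : Set I) (hJ : J ≠ Set.univ) (hJ' : J' ≠ Set.univ)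
    (w : V ≃ₗ[ℝ] V)
    (hwW : w ∈ Subgroup.closure {g : V ≃ₗ[ℝ] V | ∃ j ∈ J', g = s j})
    (hlongest : ∀ b ∈ Φ, (b : V) ∈ Submodule.span ℝ (α '' J') →
      (∃ c : I → ℤ, (∀ i, 0 ≤ c i) ∧ b = ∑ i, (c i : ℝ) • α i) →
      ∃ c : I → ℤ, (∀ i, c i ≤ 0) ∧ w b = ∑ i, (c i : ℝ) • α i) :
    ∃ j, j ∉ J' ∧
      ¬ (w (α j) ∈ Φ ∧ w (α j) ∈ Submodule.span ℝ (α '' J)) := by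
  obtain ⟨b, rfl⟩ : ∃ b : Module.Basis I ℝ V, ⇑b = α :=
    ⟨.mk hindep hspan.ge, Module.Basis.coe_mk _ _⟩
  have hsign (x) (hx : x ∈ Φ) : b.IsSignCoherent x := b.isSignCoherent_of_intCoeffs (hbase x hx)
  have hsr (i) : ⇑(s i) = hyperplaneReflection (b i) := funext (hs i)
  have hobtuse : ∀ i j, i ≠ j → ⟪b i, b j⟫ ≤ 0 := fun i j hij =>
    b.inner_nonpos_of_isSignCoherent_reflection hij (hsr i ▸ hsign _ (hstab i _ (hα j)))
  obtain ⟨⟨hwstab, hwinner⟩, hwK⟩ : w ∈ MulAction.stabilizer (V ≃ₗ[ℝ] V) (Φ : Set V) ⊓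
      innerPreservingSubgroup V ⊓ (span ℝ (b '' J')).fixingQuotientSubgroup := by
    refine (Subgroup.closure_le _).2 ?_ hwW
    rintro _ ⟨j, hj, rfl⟩
    exact mem_inf_of_coe_eq_hyperplaneReflection (hsr j) (hstab j) (subset_span ⟨j, hj, rfl⟩)
  have hwΦ : MapsTo w Φ Φ := fun x hx => hwstab ▸ smul_mem_smul_set hx
  have hw1 (j) (hj : j ∉ J') : b.repr (w (b j)) j = 1 :=
    b.repr_apply_self_of_mem_fixingQuotientSubgroup hwK hj
  have hwpos (j) (hj : j ∉ J') : ∀ k, 0 ≤ b.repr (w (b j)) k :=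
    (hsign _ (hwΦ (hα j))).resolve_right fun h => by linarith [h j, hw1 j hj]
  by_contra! hcon
  obtain ⟨j, hj, m, hm, hlt⟩ := b.exists_inner_neg_of_connected hobtuse hirr hJ hJ'
    (fun j => w (b j)) hwpos (fun j hj => by simp [hw1 j hj]) fun j hj => (hcon j hj).2
  obtain ⟨u, huK, hu, hwu⟩ := b.exists_repr_nonpos_apply_eq Φ.finite_toSet hwΦ hwK
    (fun x hx hxK => b.repr_nonpos_or_repr_apply_nonpos (hbase x hx) (hlongest x hx hxK)) hm (hα m)
  exact hlt.not_ge (hwu ▸ b.inner_apply_nonneg_of_repr_nonpos hobtuse hwinner huK hu hj)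

/-- Lemma on irreducible root systems: for proper subsets `J, J'` of the set of
simple roots, there is a simple root `α_j` with `j ∉ J'` such that the longest
element `w_{J'}` of the parabolic `W_{J'}` sends `α_j` outside `Φ_J`. The root
system is given by a finite set `Φ` of roots in a Euclidean space with a base
`α : I → V`, reflections `s i`, crystallographic integrality, reducedness and
irreducibility (connectedness of the Dynkin diagram); the longest element of
`W_{J'}` is characterized as an element of `W_{J'}` sending every positive root
of `Φ_{J'}` to a negative root. -/
theorem stmt2 {V : Type*} [NormedAddCommGroup V] [InnerProductSpace ℝ V]
    {I : Type*} [Fintype I] [DecidableEq I]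
    (Φ : Finset V) (α : I → V)
    (hα : ∀ i, α i ∈ Φ)
    (h0 : (0 : V) ∉ (Φ : Set V))
    (hindep : LinearIndependent ℝ α)
    (hspan : Submodule.span ℝ (Set.range α) = ⊤)
    (s : I → (V ≃ₗ[ℝ] V))
    (hs : ∀ i x, s i x =
      x - ((2 * (inner ℝ (α i) x : ℝ) / (inner ℝ (α i) (α i) : ℝ)) • α i))
    (hstab : ∀ i, ∀ b ∈ Φ, s i b ∈ Φ)
    (hbase : ∀ b ∈ Φ,
      (∃ c : I → ℤ, (∀ i, 0 ≤ c i) ∧ b = ∑ i, (c i : ℝ) • α i) ∨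
      (∃ c : I → ℤ, (∀ i, c i ≤ 0) ∧ b = ∑ i, (c i : ℝ) • α i))
    (hcrys : ∀ a ∈ Φ, ∀ b ∈ Φ,
      ∃ z : ℤ, (2 * (inner ℝ a b : ℝ) / (inner ℝ a a : ℝ)) = (z : ℝ))
    (hreduced : ∀ b ∈ Φ, ∀ c : ℝ, c • b ∈ Φ → c = 1 ∨ c = -1)
    (hirr : ∀ A : Set I, A.Nonempty → A ≠ Set.univ →
      ∃ i ∈ A, ∃ j, j ∉ A ∧ (inner ℝ (α i) (α j) : ℝ) ≠ 0)
    (J J' : Set I) (hJ : J ≠ Set.univ) (hJ' : J' ≠ Set.univ)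
    (w : V ≃ₗ[ℝ] V)
    (hwW : w ∈ Subgroup.closure {g : V ≃ₗ[ℝ] V | ∃ j ∈ J', g = s j})
    (hlongest : ∀ b ∈ Φ, (b : V) ∈ Submodule.span ℝ (α '' J') →
      (∃ c : I → ℤ, (∀ i, 0 ≤ c i) ∧ b = ∑ i, (c i : ℝ) • α i) →
      ∃ c : I → ℤ, (∀ i, c i ≤ 0) ∧ w b = ∑ i, (c i : ℝ) • α i) :
    ∃ j, j ∉ J' ∧
      ¬ (w (α j) ∈ Φ ∧ w (α j) ∈ Submodule.span ℝ (α '' J)) :=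
  stmt2_general Φ α hα hindep hspan s hs hstab hbase hirr J J' hJ hJ' w hwW hlongest
end

section
/- Let $T_{>1} = \{\mathrm{diag}(t_1,\dots,t_n) : t_1 > t_2 > \cdots > t_n > 0\}$ inside $GL_n(\mathbb{R})$. For any $t \in T_{>1}$, there exists a matrix $g$ in the conjugacy class of $t$ (in $GL_n(\mathbb{R})$) which is tridiagonal with all entries on the diagonal, superdiagonal and subdiagonal strictly positive: i.e., every real diagonalizable matrix with distinct positive eigenvalues is conjugate to a positive Jacobi matrix. -/
/-! Lanczos process. Let `T` be multiplication by `t` on `ℝⁿ` and `x = (1, …, 1)`. The Krylov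
vectors `Tʲ x = (tᵢʲ)ᵢ` are the columns of a Vandermonde matrix, hence a basis, and Gram–Schmidt
turns them into an orthonormal basis `v` with `span (v₀, …, vₖ) = span (x, …, Tᵏ x)`. Since `T`
raises the Krylov degree by one, the matrix `⟪vᵢ, T vₖ⟫` of `T` in this basis is upper Hessenberg;
since `T` is self-adjoint it is symmetric, hence tridiagonal. Its diagonal is positive because `T`
is positive definite, and its subdiagonal entries are `⟪vₖ₊₁, T vₖ⟫ = ‖uₖ₊₁‖ / ‖uₖ‖ > 0`, where
the `uₖ` are the unnormalised Gram–Schmidt vectors. -/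

open Matrix Submodule Set InnerProductSpace

section GramSchmidt

variable {𝕜 E ι : Type*} [RCLike 𝕜] [NormedAddCommGroup E] [InnerProductSpace 𝕜 E]
  [LinearOrder ι] [LocallyFiniteOrderBot ι] [WellFoundedLT ι]

theorem inner_gramSchmidtNormed_eq_zero_of_mem_span {f : ι → E} {i : ι} {y : E}
    (hy : y ∈ span 𝕜 (f '' Iio i)) : inner 𝕜 (gramSchmidtNormed 𝕜 f i) y = 0 := by
  suffices span 𝕜 (f '' Iio i) ≤ (𝕜 ∙ gramSchmidtNormed 𝕜 f i)ᗮ from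
    mem_orthogonal_singleton_iff_inner_right.mp (this hy)
  rw [span_le]
  rintro _ ⟨j, hj, rfl⟩
  rw [SetLike.mem_coe, mem_orthogonal_singleton_iff_inner_right, gramSchmidtNormed,
    inner_smul_left, gramSchmidt_inv_triangular 𝕜 f hj, mul_zero]

theorem sub_gramSchmidt_mem_span (f : ι → E) (i : ι) :
    f i - gramSchmidt 𝕜 f i ∈ span 𝕜 (f '' Iio i) := by
  rw [gramSchmidt_def 𝕜 f i, sub_sub_cancel, ← span_gramSchmidt_Iio]
  refine Submodule.sum_mem _ fun j hj => ?_
  have hle : (𝕜 ∙ gramSchmidt 𝕜 f j) ≤ span 𝕜 (gramSchmidt 𝕜 f '' Iio i) :=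
    span_mono (singleton_subset_iff.mpr (mem_image_of_mem _ (Finset.mem_Iio.mp hj)))
  exact hle (starProjection_apply_mem _ _)

theorem gramSchmidtNormed_mem_span_Iic (f : ι → E) (i : ι) :
    gramSchmidtNormed 𝕜 f i ∈ span 𝕜 (f '' Iic i) :=
  smul_mem _ _ (gramSchmidt_mem_span 𝕜 f le_rfl)

theorem inner_gramSchmidtNormed_self (f : ι → E) (i : ι) :
    inner 𝕜 (gramSchmidtNormed 𝕜 f i) (f i) = ‖gramSchmidt 𝕜 f i‖ := by
  have hperp := inner_gramSchmidtNormed_eq_zero_of_mem_span (sub_gramSchmidt_mem_span (𝕜 := 𝕜) f i)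
  rw [inner_sub_right, sub_eq_zero] at hperp
  rw [hperp, gramSchmidtNormed, inner_smul_left, inner_self_eq_norm_sq_to_K, RCLike.conj_inv,
    RCLike.conj_ofReal]
  by_cases h : gramSchmidt 𝕜 f i = 0
  · simp [h]
  · field_simp

end GramSchmidt

def krylov {E : Type*} [AddCommGroup E] [Module ℝ E] (T : E →ₗ[ℝ] E) (x : E) (n : ℕ)
    (j : Fin n) : E :=
  (T ^ (j : ℕ)) x

def Matrix.IsPosJacobi {n : ℕ} (g : Matrix (Fin n) (Fin n) ℝ) : Prop :=
  (∀ i : Fin n, 0 < g i i) ∧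
  (∀ i k : Fin n, (i : ℕ) + 1 = (k : ℕ) → 0 < g i k) ∧
  (∀ i k : Fin n, (k : ℕ) + 1 = (i : ℕ) → 0 < g i k) ∧
  (∀ i k : Fin n, ((i : ℕ) + 1 < (k : ℕ) ∨ (k : ℕ) + 1 < (i : ℕ)) → g i k = 0)

section Lanczos

variable {E : Type*} [NormedAddCommGroup E] [InnerProductSpace ℝ E] (T : E →ₗ[ℝ] E) (x : E)
  {n : ℕ}

theorem apply_mem_span_krylov {s : Set (Fin n)} {i : Fin n} (hs : ∀ l ∈ s, (l : ℕ) + 1 < i)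
    {y : E} (hy : y ∈ span ℝ (krylov T x n '' s)) : T y ∈ span ℝ (krylov T x n '' Iio i) := by
  rw [← mem_comap, ← SetLike.mem_coe]
  refine (span_le.mpr ?_) hy
  rintro _ ⟨l, hl, rfl⟩
  have hlt : (l : ℕ) + 1 < n := (hs l hl).trans i.isLt
  have hT : T (krylov T x n l) = krylov T x n ⟨l + 1, hlt⟩ := by
    simp only [krylov, pow_succ', Module.End.mul_apply]
  rw [SetLike.mem_coe, mem_comap, hT]
  exact subset_span (mem_image_of_mem _ (show (⟨l + 1, hlt⟩ : Fin n) < i from hs l hl))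

local notation "v" => gramSchmidtNormed ℝ (krylov T x n)

theorem inner_gramSchmidtNormed_krylov_eq_zero {i k : Fin n} (hki : (k : ℕ) + 1 < i) :
    inner ℝ (v i) (T (v k)) = 0 :=
  inner_gramSchmidtNormed_eq_zero_of_mem_span <|
    apply_mem_span_krylov T x (fun _ hl => lt_of_le_of_lt (Nat.add_le_add_right hl 1) hki)
      (gramSchmidtNormed_mem_span_Iic _ k)

theorem inner_gramSchmidtNormed_krylov_succ {k m : Fin n} (hkm : (k : ℕ) + 1 = m) :
    inner ℝ (v m) (T (v k)) =
      ‖gramSchmidt ℝ (krylov T x n) k‖⁻¹ * ‖gramSchmidt ℝ (krylov T x n) m‖ := by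
  set f := krylov T x n
  have hTf : T (f k) = f m := by
    simp only [f, krylov, ← hkm, pow_succ', Module.End.mul_apply]
  have hrest : inner ℝ (v m) (T (f k - gramSchmidt ℝ f k)) = 0 :=
    inner_gramSchmidtNormed_eq_zero_of_mem_span <|
      apply_mem_span_krylov T x (fun l hl => hkm ▸ Nat.add_lt_add_right hl 1)
        (sub_gramSchmidt_mem_span f k)
  rw [map_sub, inner_sub_right, hTf, inner_gramSchmidtNormed_self, sub_eq_zero] at hrest
  have hvk : v k = ‖gramSchmidt ℝ f k‖⁻¹ • gramSchmidt ℝ f k := rfl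
  rw [hvk, map_smul, inner_smul_right, ← hrest]
  rfl

variable [FiniteDimensional ℝ E] {T x}

theorem exists_orthonormalBasis_isPosJacobi_toMatrix
    (hn : Module.finrank ℝ E = Fintype.card (Fin n)) (hT : T.IsSymmetric)
    (hTpos : ∀ y ≠ 0, 0 < inner ℝ y (T y)) (hx : LinearIndependent ℝ (krylov T x n)) :
    ∃ b : OrthonormalBasis (Fin n) ℝ E, (LinearMap.toMatrix b.toBasis b.toBasis T).IsPosJacobi := by
  have hv : Orthonormal ℝ v := gramSchmidtNormed_orthonormal hx
  set b := gramSchmidtOrthonormalBasis hn (krylov T x n)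
  have hentry (i k : Fin n) :
      LinearMap.toMatrix b.toBasis b.toBasis T i k = inner ℝ (v i) (T (v k)) := by
    simp only [b, LinearMap.toMatrix_apply, OrthonormalBasis.coe_toBasis_repr_apply,
      OrthonormalBasis.repr_apply_apply, OrthonormalBasis.coe_toBasis,
      gramSchmidtOrthonormalBasis_apply hn (hv.ne_zero _)]
  have hsymm (i k : Fin n) : inner ℝ (v i) (T (v k)) = inner ℝ (v k) (T (v i)) := by
    rw [← hT, real_inner_comm]
  have hsub {k m : Fin n} (hkm : (k : ℕ) + 1 = m) : 0 < inner ℝ (v m) (T (v k)) := by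
    rw [inner_gramSchmidtNormed_krylov_succ T x hkm]
    exact mul_pos (inv_pos.mpr (norm_pos_iff.mpr (gramSchmidt_ne_zero k hx)))
      (norm_pos_iff.mpr (gramSchmidt_ne_zero m hx))
  refine ⟨b, fun i => ?_, fun i k hik => ?_, fun i k hki => ?_, fun i k hfar => ?_⟩ <;>
    simp only [hentry]
  · exact hTpos _ (hv.ne_zero i)
  · exact hsymm k i ▸ hsub hik
  · exact hsub hki
  · rcases hfar with hik | hki
    · rw [hsymm]
      exact inner_gramSchmidtNormed_krylov_eq_zero T x hik
    · exact inner_gramSchmidtNormed_krylov_eq_zero T x hki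

end Lanczos

theorem Module.Basis.exists_toMatrix_eq_conj {ι R M : Type*} [Fintype ι] [DecidableEq ι]
    [CommRing R] [AddCommGroup M] [Module R M] (b e : Module.Basis ι R M) (f : M →ₗ[R] M) :
    ∃ P : GL ι R, LinearMap.toMatrix b b f =
      (P : Matrix ι ι R) * LinearMap.toMatrix e e f * ((P⁻¹ : GL ι R) : Matrix ι ι R) :=
  ⟨⟨b.toMatrix e, e.toMatrix b, b.toMatrix_mul_toMatrix_flip e, e.toMatrix_mul_toMatrix_flip b⟩,
    (basis_toMatrix_mul_linearMap_toMatrix_mul_basis_toMatrix b e b e f).symm⟩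

theorem Matrix.PosDef.inner_toEuclideanLin_pos {ι : Type*} [Fintype ι] [DecidableEq ι]
    {A : Matrix ι ι ℝ} (hA : A.PosDef) {y : EuclideanSpace ℝ ι} (hy : y ≠ 0) :
    0 < inner ℝ y (A.toEuclideanLin y) := by
  rw [EuclideanSpace.inner_eq_star_dotProduct, dotProduct_comm]
  exact hA.dotProduct_mulVec_pos (by simpa using hy)

theorem Matrix.PosDef.exists_isPosJacobi_conj {n : ℕ} {A : Matrix (Fin n) (Fin n) ℝ}
    (hA : A.PosDef) {x : EuclideanSpace ℝ (Fin n)}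
    (hx : LinearIndependent ℝ (krylov A.toEuclideanLin x n)) :
    ∃ (g : Matrix (Fin n) (Fin n) ℝ) (P : GL (Fin n) ℝ),
      g = (P : Matrix (Fin n) (Fin n) ℝ) * A * ((P⁻¹ : GL (Fin n) ℝ) : Matrix (Fin n) (Fin n) ℝ) ∧
        g.IsPosJacobi := by
  obtain ⟨b, hb⟩ := exists_orthonormalBasis_isPosJacobi_toMatrix
    (finrank_euclideanSpace (𝕜 := ℝ) (ι := Fin n))
    (isSymmetric_toEuclideanLin_iff.mpr hA.isHermitian) (fun _ => hA.inner_toEuclideanLin_pos) hx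
  let e := (EuclideanSpace.basisFun (Fin n) ℝ).toBasis
  obtain ⟨P, hP⟩ := b.toBasis.exists_toMatrix_eq_conj e A.toEuclideanLin
  rw [show LinearMap.toMatrix e e A.toEuclideanLin = A from LinearMap.toMatrix_toLin e e A] at hP
  exact ⟨_, P, hP, hb⟩

theorem krylov_toEuclideanLin_diagonal {n : ℕ} (t : Fin n → ℝ) (j : Fin n) :
    krylov (diagonal t).toEuclideanLin (WithLp.toLp 2 1) n j =
      WithLp.toLp 2 (fun i => t i ^ (j : ℕ)) := by
  unfold krylov
  induction (j : ℕ) with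
  | zero => rfl
  | succ m ih =>
    rw [pow_succ', Module.End.mul_apply, ih, toLpLin_toLp]
    congr 1
    ext i
    simp [pow_succ', mulVec_diagonal]

theorem linearIndependent_krylov_toEuclideanLin_diagonal {n : ℕ} {t : Fin n → ℝ}
    (ht : Function.Injective t) :
    LinearIndependent ℝ (krylov (diagonal t).toEuclideanLin (WithLp.toLp 2 1) n) := by
  rw [Fintype.linearIndependent_iff]
  intro c hc
  have hc' := eq_zero_of_forall_index_sum_mul_pow_eq_zero ht fun i => by
    simpa [krylov_toEuclideanLin_diagonal] using congrArg (· i) hc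
  simp [hc']

/-- Every real diagonalizable matrix with distinct positive eigenvalues
`t₁ > t₂ > ⋯ > tₙ > 0` is conjugate in `GL_n(ℝ)` to a positive Jacobi matrix:
a tridiagonal matrix with strictly positive diagonal, superdiagonal and
subdiagonal entries. -/
theorem stmt19 {n : ℕ} (t : Fin n → ℝ) (hpos : ∀ i, 0 < t i)
    (hmono : StrictAnti t) :
    ∃ (g : Matrix (Fin n) (Fin n) ℝ) (P : GL (Fin n) ℝ),
      g = (↑P : Matrix (Fin n) (Fin n) ℝ) * Matrix.diagonal t *
        (↑(P⁻¹) : Matrix (Fin n) (Fin n) ℝ) ∧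
      (∀ i : Fin n, 0 < g i i) ∧
      (∀ i k : Fin n, (i : ℕ) + 1 = (k : ℕ) → 0 < g i k) ∧
      (∀ i k : Fin n, (k : ℕ) + 1 = (i : ℕ) → 0 < g i k) ∧
      (∀ i k : Fin n, ((i : ℕ) + 1 < (k : ℕ) ∨ (k : ℕ) + 1 < (i : ℕ)) →
        g i k = 0) :=
  (posDef_diagonal_iff.mpr hpos).exists_isPosJacobi_conj
    (linearIndependent_krylov_toEuclideanLin_diagonal hmono.injective)
end
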